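/- Let s ∈ (0,1], let A : (0,1) → ℝ be measurable with 0 ≤ A(y) ≤ A₁ for all y, and let σ₀ > 0 be arbitrary. Then there is a constant C depending only on s such that for every u ∈ L²(Ω × (0,T)): sup_{σ∈(0,σ₀)} σ⁻¹ ‖u(x + σ^{1/s} A(y), y, t) − u(x,y,t)‖_{L²(Ω×(0,T))} ≤ C A₁^s ‖u‖_{Q^s_{∂x}}. -/

import Mathlib

open MeasureTheory ENNReal Real Set

noncomputable section

/-- The measure on `Ω × (0,T)` with `Ω = 𝕋 × (0,1)`, where functions on the torus `𝕋 = ℝ/ℤ`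
are represented as `1`-periodic functions of `x ∈ ℝ` and the `x`-integration is over `(0,1)`. -/
def μΩT (T : ℝ) : Measure (ℝ × ℝ × ℝ) :=
  (volume.restrict (Ioo (0:ℝ) 1)).prod
    ((volume.restrict (Ioo (0:ℝ) 1)).prod (volume.restrict (Ioo (0:ℝ) T)))

/-- `‖u‖_{Q^s_{∂x}} = sup_{σ > 0} σ⁻¹ ‖u(x + σ^{1/s}, y, t) − u(x,y,t)‖_{L²(Ω×(0,T))}`. -/
def QsDx (T s : ℝ) (u : ℝ × ℝ × ℝ → ℝ) : ℝ≥0∞ :=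
  ⨆ σ : {σ : ℝ // 0 < σ}, ENNReal.ofReal ((σ : ℝ))⁻¹ *
    eLpNorm (fun p : ℝ × ℝ × ℝ =>
      u (p.1 + (σ : ℝ) ^ (1 / s), p.2.1, p.2.2) - u p) 2 (μΩT T)

/-- `‖u‖_{Q^s_{A∂x},σ₀} = sup_{σ ∈ (0,σ₀)} σ⁻¹ ‖u(x + σ^{1/s} A(y), y, t) − u(x,y,t)‖_{L²(Ω×(0,T))}`. -/
def QsADx (T s : ℝ) (A : ℝ → ℝ) (σ₀ : ℝ) (u : ℝ × ℝ × ℝ → ℝ) : ℝ≥0∞ :=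
  ⨆ σ ∈ Ioo (0:ℝ) σ₀, ENNReal.ofReal σ⁻¹ *
    eLpNorm (fun p : ℝ × ℝ × ℝ =>
      u (p.1 + σ ^ (1 / s) * A p.2.1, p.2.1, p.2.2) - u p) 2 (μΩT T)

/-!
Write `τ_c u (x, y, t) = u (x + c y, y, t)`. For a constant `c`, `τ_{h+c} u - τ_h u` is
`τ_c u - u` sheared by `h`, and shears preserve the measure of the periodic cylinder, so
`‖τ_h u - u‖² ≤ 2 ‖τ_{h+c} u - u‖² + 2 ‖τ_c u - u‖²`. Averaging over `c ∈ (0, r)` and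
applying Tonelli in `(c, x)` turns the first term into an average over constant shifts
`c' ∈ (0, 2r)` whenever `0 ≤ h ≤ r`; hence `‖τ_h u - u‖² ≤ 6 sup_{c' < 2r} ‖τ_{c'} u - u‖²
≤ 6 (2r)^{2s} ‖u‖²_{Q^s_{∂x}}`. Taking `h = σ^{1/s} A` and `r = σ^{1/s} A₁` gives `C = 3 · 2^s`.
-/

open Function

theorem Function.Periodic.setLIntegral_Ioc_comp_add {G : ℝ → ℝ≥0∞} (hG : Periodic G 1) (a : ℝ) :
    ∫⁻ x in Ioc 0 1, G (x + a) = ∫⁻ x in Ioc 0 1, G x := by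
  have hcircle (t : ℝ) : ∫⁻ x in Ioc t (t + 1), G x = ∫⁻ θ : UnitAddCircle, hG.lift θ := by
    rw [← UnitAddCircle.lintegral_preimage t]
    simp only [Periodic.lift_coe]
  calc ∫⁻ x in Ioc 0 1, G (x + a) = ∫⁻ x in (· + a) ⁻¹' Ioc a (a + 1), G (x + a) := by
        rw [preimage_add_const_Ioc, sub_self, add_sub_cancel_left]
    _ = ∫⁻ x in Ioc a (a + 1), G x :=
        (measurePreserving_add_right volume a).setLIntegral_comp_preimage_emb
          (measurableEmbedding_addRight a) G _
    _ = ∫⁻ x in Ioc 0 1, G x := by rw [hcircle, ← hcircle 0, zero_add]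

lemma setLIntegral_Ioo_comp_add_le (f : ℝ → ℝ≥0∞) {a r b : ℝ} (ha : 0 ≤ a) (hab : a + r ≤ b) :
    ∫⁻ c in Ioo 0 r, f (c + a) ≤ ∫⁻ c in Ioo 0 b, f c :=
  calc ∫⁻ c in Ioo 0 r, f (c + a) = ∫⁻ c in (· + a) ⁻¹' Ioo a (a + r), f (c + a) := by
        rw [preimage_add_const_Ioo, sub_self, add_sub_cancel_left]
    _ = ∫⁻ c in Ioo a (a + r), f c :=
        (measurePreserving_add_right volume a).setLIntegral_comp_preimage_emb
          (measurableEmbedding_addRight a) f _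
    _ ≤ ∫⁻ c in Ioo 0 b, f c :=
        lintegral_mono_set fun c hc => ⟨ha.trans_lt hc.1, hc.2.trans_le hab⟩

lemma eLpNorm_two_sq {α : Type*} [MeasurableSpace α] (f : α → ℝ) (μ : Measure α) :
    eLpNorm f 2 μ ^ 2 = ∫⁻ x, ‖f x‖ₑ ^ 2 ∂μ := by
  simpa using eLpNorm_nnreal_pow_eq_lintegral (f := f) (μ := μ) (p := 2) two_ne_zero

lemma enorm_sub_sq_le (a b c : ℝ) : ‖a - b‖ₑ ^ 2 ≤ 2 * ‖c - b‖ₑ ^ 2 + 2 * ‖c - a‖ₑ ^ 2 := by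
  have h : ‖a - b‖₊ ^ 2 ≤ 2 * ‖c - b‖₊ ^ 2 + 2 * ‖c - a‖₊ ^ 2 := by
    rw [← NNReal.coe_le_coe]
    push_cast
    simp only [Real.norm_eq_abs, sq_abs]
    nlinarith [sq_nonneg (a + b - 2 * c)]
  simp only [enorm_eq_nnnorm]
  exact_mod_cast h

def shearX (c : ℝ → ℝ) (p : ℝ × ℝ × ℝ) : ℝ × ℝ × ℝ := (p.1 + c p.2.1, p.2)

def fractX (p : ℝ × ℝ × ℝ) : ℝ × ℝ × ℝ := (Int.fract p.1, p.2)

@[fun_prop]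
lemma measurable_shearX {c : ℝ → ℝ} (hc : Measurable c) : Measurable (shearX c) := by
  unfold shearX; fun_prop

@[fun_prop]
lemma measurable_fractX : Measurable fractX := by
  unfold fractX; fun_prop

instance (T : ℝ) : SFinite (μΩT T) := by
  rw [μΩT]; infer_instance

lemma μΩT_eq_Ioc (T : ℝ) : μΩT T = (volume.restrict (Ioc (0:ℝ) 1)).prod
    ((volume.restrict (Ioo (0:ℝ) 1)).prod (volume.restrict (Ioo (0:ℝ) T))) := by
  rw [μΩT, Measure.restrict_congr_set Ioo_ae_eq_Ioc]

lemma ae_mem_Ioo_fst (T : ℝ) : ∀ᵐ p ∂μΩT T, p.1 ∈ Ioo (0:ℝ) 1 :=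
  Measure.quasiMeasurePreserving_fst.ae (ae_restrict_mem measurableSet_Ioo)

lemma ae_mem_Ioo_snd_fst (T : ℝ) : ∀ᵐ p ∂μΩT T, p.2.1 ∈ Ioo (0:ℝ) 1 :=
  Measure.quasiMeasurePreserving_snd.ae
    (Measure.quasiMeasurePreserving_fst.ae (ae_restrict_mem measurableSet_Ioo))

lemma lintegral_comp_shearX {G : ℝ × ℝ × ℝ → ℝ≥0∞} (hG : Measurable G)
    (hper : ∀ q, Periodic (fun x => G (x, q)) 1) {c : ℝ → ℝ} (hc : Measurable c) (T : ℝ) :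
    ∫⁻ p, G (shearX c p) ∂μΩT T = ∫⁻ p, G p ∂μΩT T := by
  rw [μΩT_eq_Ioc, lintegral_prod_symm _ hG.aemeasurable,
    lintegral_prod_symm (fun p => G (shearX c p)) (hG.comp (measurable_shearX hc)).aemeasurable]
  exact lintegral_congr fun q => (hper q).setLIntegral_Ioc_comp_add (c q.1)

-- The shear alone moves mass out of `0 < x < 1`; reducing mod `1` brings it back.
lemma measurePreserving_fractX_shearX {c : ℝ → ℝ} (hc : Measurable c) (T : ℝ) :
    MeasurePreserving (fractX ∘ shearX c) (μΩT T) (μΩT T) := by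
  refine ⟨by fun_prop, Measure.ext fun S hS => ?_⟩
  have hfract : ∫⁻ p, S.indicator 1 (fractX p) ∂μΩT T = ∫⁻ p, S.indicator 1 p ∂μΩT T := by
    refine lintegral_congr_ae ?_
    filter_upwards [ae_mem_Ioo_fst T] with p hp
    rw [fractX, Int.fract_eq_self.mpr ⟨hp.1.le, hp.2⟩]
  rw [← lintegral_indicator_one hS, lintegral_map (measurable_one.indicator hS) (by fun_prop),
    ← lintegral_indicator_one hS, ← hfract]
  refine lintegral_comp_shearX ((measurable_one.indicator hS).comp measurable_fractX) ?_ hc T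
  intro q x
  simp only [comp_apply, fractX, Int.fract_add_one]

lemma periodic_comp_fractX {v : ℝ × ℝ × ℝ → ℝ} (hv : ∀ q, Periodic (fun x => v (x, q)) 1)
    (p : ℝ × ℝ × ℝ) : v (fractX p) = v p := by
  have h := (hv p.2).sub_int_mul_eq (x := p.1) ⌊p.1⌋
  rwa [mul_one] at h

lemma exists_measurable_periodic_ae_eq {u : ℝ × ℝ × ℝ → ℝ} {T : ℝ}
    (hu : AEStronglyMeasurable u (μΩT T)) :
    ∃ g, Measurable g ∧ (∀ q, Periodic (fun x => g (x, q)) 1) ∧ u =ᵐ[μΩT T] g := by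
  refine ⟨hu.mk u ∘ fractX, hu.stronglyMeasurable_mk.measurable.comp measurable_fractX,
    fun q x => by simp [fractX, Int.fract_add_one], ?_⟩
  filter_upwards [hu.ae_eq_mk, ae_mem_Ioo_fst T] with p hup hp
  rw [comp_apply, fractX, Int.fract_eq_self.mpr ⟨hp.1.le, hp.2⟩]
  exact hup

lemma comp_shearX_ae_eq {u g : ℝ × ℝ × ℝ → ℝ} {T : ℝ}
    (hu : ∀ q, Periodic (fun x => u (x, q)) 1) (hg : ∀ q, Periodic (fun x => g (x, q)) 1)
    (hug : u =ᵐ[μΩT T] g) {c : ℝ → ℝ} (hc : Measurable c) :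
    u ∘ shearX c =ᵐ[μΩT T] g ∘ shearX c := by
  have h := (measurePreserving_fractX_shearX hc T).quasiMeasurePreserving.ae_eq_comp hug
  filter_upwards [h] with p hp
  simpa [periodic_comp_fractX hu, periodic_comp_fractX hg] using hp

lemma eLpNorm_comp_shearX_sub_congr {u g : ℝ × ℝ × ℝ → ℝ} {T : ℝ} {p : ℝ≥0∞}
    (hu : ∀ q, Periodic (fun x => u (x, q)) 1) (hg : ∀ q, Periodic (fun x => g (x, q)) 1)
    (hug : u =ᵐ[μΩT T] g) {c : ℝ → ℝ} (hc : Measurable c) :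
    eLpNorm (u ∘ shearX c - u) p (μΩT T) = eLpNorm (g ∘ shearX c - g) p (μΩT T) :=
  eLpNorm_congr_ae ((comp_shearX_ae_eq hu hg hug hc).sub hug)

lemma eLpNorm_shearX_const_sub_le_QsDx {s δ : ℝ} (hs : s ≠ 0) (hδ : 0 < δ) (T : ℝ)
    (u : ℝ × ℝ × ℝ → ℝ) :
    eLpNorm (u ∘ shearX (fun _ => δ) - u) 2 (μΩT T) ≤ ENNReal.ofReal (δ ^ s) * QsDx T s u := by
  have hδs : 0 < δ ^ s := Real.rpow_pos_of_pos hδ s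
  have h := le_iSup (fun σ : {σ : ℝ // 0 < σ} => ENNReal.ofReal ((σ : ℝ))⁻¹ *
    eLpNorm (fun p : ℝ × ℝ × ℝ => u (p.1 + (σ : ℝ) ^ (1 / s), p.2.1, p.2.2) - u p) 2 (μΩT T))
    ⟨δ ^ s, hδs⟩
  have hpow : (δ ^ s) ^ (1 / s) = δ := by rw [one_div, Real.rpow_rpow_inv hδ.le hs]
  rw [hpow, ENNReal.ofReal_inv_of_pos hδs,
    ENNReal.inv_mul_le_iff (by simpa using hδs) ENNReal.ofReal_ne_top] at h
  exact h

section Averaging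

variable {g : ℝ × ℝ × ℝ → ℝ} {T : ℝ}

def shearDefect (g : ℝ × ℝ × ℝ → ℝ) (T : ℝ) (c : ℝ → ℝ) : ℝ≥0∞ :=
  ∫⁻ p, ‖g (shearX c p) - g p‖ₑ ^ 2 ∂μΩT T

lemma eLpNorm_sq_eq_shearDefect (g : ℝ × ℝ × ℝ → ℝ) (T : ℝ) (c : ℝ → ℝ) :
    eLpNorm (g ∘ shearX c - g) 2 (μΩT T) ^ 2 = shearDefect g T c :=
  eLpNorm_two_sq _ _

lemma shearDefect_le_add (hg : Measurable g) (hper : ∀ q, Periodic (fun x => g (x, q)) 1)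
    {h : ℝ → ℝ} (hh : Measurable h) (c : ℝ) :
    shearDefect g T h ≤
      2 * shearDefect g T (fun y => h y + c) + 2 * shearDefect g T (fun _ => c) := by
  have hinv : shearDefect g T (fun _ => c) =
      ∫⁻ p, ‖g (shearX (fun y => h y + c) p) - g (shearX h p)‖ₑ ^ 2 ∂μΩT T := by
    refine (lintegral_comp_shearX (G := fun p => ‖g (shearX (fun _ => c) p) - g p‖ₑ ^ 2)
      (by fun_prop) (fun q x => ?_) hh T).symm.trans ?_
    · simp only [shearX, add_right_comm x 1 c, hper _ _]
    · simp only [shearX, add_assoc]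
  rw [shearDefect, shearDefect, hinv, ← lintegral_const_mul _ (by fun_prop),
    ← lintegral_const_mul _ (by fun_prop), ← lintegral_add_left (by fun_prop)]
  exact lintegral_mono fun p => enorm_sub_sq_le _ _ _

lemma setLIntegral_shearDefect_add_const_le (hg : Measurable g) {h : ℝ → ℝ} (hh : Measurable h)
    {r : ℝ} (hhr : ∀ y ∈ Ioo (0:ℝ) 1, h y ∈ Icc 0 r) :
    ∫⁻ c in Ioo 0 r, shearDefect g T (fun y => h y + c) ≤
      ∫⁻ c in Ioo 0 (2 * r), shearDefect g T (fun _ => c) := by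
  let F (p : ℝ × ℝ × ℝ) (c : ℝ) : ℝ≥0∞ := ‖g (p.1 + c, p.2) - g p‖ₑ ^ 2
  have hF : Measurable (uncurry F) := by fun_prop
  calc ∫⁻ c in Ioo 0 r, shearDefect g T (fun y => h y + c)
      = ∫⁻ c in Ioo 0 r, ∫⁻ p, F p (c + h p.2.1) ∂μΩT T := by
        simp only [shearDefect, shearX, F, add_comm (h _)]
    _ = ∫⁻ p, (∫⁻ c in Ioo 0 r, F p (c + h p.2.1)) ∂μΩT T :=
        lintegral_lintegral_swap
          (hF.comp (f := fun z : ℝ × ℝ × ℝ × ℝ => (z.2, z.1 + h z.2.2.1))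
            (by fun_prop)).aemeasurable
    _ ≤ ∫⁻ p, (∫⁻ c in Ioo 0 (2 * r), F p c) ∂μΩT T := by
        refine lintegral_mono_ae ?_
        filter_upwards [ae_mem_Ioo_snd_fst T] with p hp
        exact setLIntegral_Ioo_comp_add_le _ (hhr _ hp).1 (by linarith [(hhr _ hp).2])
    _ = ∫⁻ c in Ioo 0 (2 * r), shearDefect g T (fun _ => c) :=
        lintegral_lintegral_swap hF.aemeasurable

lemma shearDefect_le_of_forall_const_le (hg : Measurable g)
    (hper : ∀ q, Periodic (fun x => g (x, q)) 1) {h : ℝ → ℝ} (hh : Measurable h) {r : ℝ}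
    (hr : 0 < r) (hhr : ∀ y ∈ Ioo (0:ℝ) 1, h y ∈ Icc 0 r) {M : ℝ≥0∞}
    (hM : ∀ δ ∈ Ioo 0 (2 * r), shearDefect g T (fun _ => δ) ≤ M) :
    shearDefect g T h ≤ 6 * M := by
  have hvol (b : ℝ) (M : ℝ≥0∞) : ∫⁻ _ in Ioo 0 b, M = M * ENNReal.ofReal b := by
    rw [setLIntegral_const, Real.volume_Ioo, sub_zero]
  refine (ENNReal.mul_le_mul_iff_right (by simpa using hr) ENNReal.ofReal_ne_top).1 ?_
  calc ENNReal.ofReal r * shearDefect g T h = ∫⁻ c in Ioo 0 r, shearDefect g T h := by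
        rw [hvol, mul_comm]
    _ ≤ ∫⁻ c in Ioo 0 r, (2 * shearDefect g T (fun y => h y + c) + 2 * M) := by
        refine setLIntegral_mono' measurableSet_Ioo fun c hc => ?_
        grw [shearDefect_le_add hg hper hh c, hM c ⟨hc.1, by linarith [hc.2]⟩]
    _ = 2 * (∫⁻ c in Ioo 0 r, shearDefect g T (fun y => h y + c)) + 2 * M * ENNReal.ofReal r := by
        rw [lintegral_add_right _ measurable_const, lintegral_const_mul' _ _ ENNReal.ofNat_ne_top,
          hvol]
    _ ≤ 2 * (∫⁻ _ in Ioo 0 (2 * r), M) + 2 * M * ENNReal.ofReal r := by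
        grw [setLIntegral_shearDefect_add_const_le hg hh hhr]
        gcongr 2 * ?_ + _
        exact setLIntegral_mono' measurableSet_Ioo hM
    _ = ENNReal.ofReal r * (6 * M) := by
        rw [hvol, ENNReal.ofReal_mul zero_le_two, ENNReal.ofReal_ofNat]
        ring

end Averaging

lemma eLpNorm_shearX_sub_le {g : ℝ × ℝ × ℝ → ℝ} {T s r : ℝ} {Q : ℝ≥0∞} (hs : 0 ≤ s)
    (hg : Measurable g) (hper : ∀ q, Periodic (fun x => g (x, q)) 1) {h : ℝ → ℝ}
    (hh : Measurable h) (hr : 0 ≤ r) (hhr : ∀ y ∈ Ioo (0:ℝ) 1, h y ∈ Icc 0 r)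
    (hQ : ∀ δ, 0 < δ →
      eLpNorm (g ∘ shearX (fun _ => δ) - g) 2 (μΩT T) ≤ ENNReal.ofReal (δ ^ s) * Q) :
    eLpNorm (g ∘ shearX h - g) 2 (μΩT T) ≤ ENNReal.ofReal (3 * (2 * r) ^ s) * Q := by
  rcases hr.eq_or_lt with rfl | hr
  · have hzero : g ∘ shearX h - g =ᵐ[μΩT T] 0 := by
      filter_upwards [ae_mem_Ioo_snd_fst T] with p hp
      have : h p.2.1 = 0 := le_antisymm (hhr _ hp).2 (hhr _ hp).1
      simp [shearX, this]
    rw [eLpNorm_congr_ae hzero, eLpNorm_zero]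
    exact zero_le
  have hmono : ∀ δ ∈ Ioo 0 (2 * r), shearDefect g T (fun _ => δ) ≤
      (ENNReal.ofReal ((2 * r) ^ s) * Q) ^ 2 := fun δ hδ => by
    rw [← eLpNorm_sq_eq_shearDefect]
    grw [hQ δ hδ.1, Real.rpow_le_rpow hδ.1.le hδ.2.le hs]
  rw [← ENNReal.pow_le_pow_left_iff two_ne_zero, eLpNorm_sq_eq_shearDefect]
  calc shearDefect g T h ≤ 6 * (ENNReal.ofReal ((2 * r) ^ s) * Q) ^ 2 :=
        shearDefect_le_of_forall_const_le hg hper hh hr hhr hmono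
    _ ≤ 9 * (ENNReal.ofReal ((2 * r) ^ s) * Q) ^ 2 := by gcongr; norm_num
    _ = (ENNReal.ofReal (3 * (2 * r) ^ s) * Q) ^ 2 := by
        rw [ENNReal.ofReal_mul zero_le_three, ENNReal.ofReal_ofNat]
        ring

/-- Upper bound for the directional seminorm `Q^s_{A∂x}` when `0 ≤ A ≤ A₁`:
`‖u‖_{Q^s_{A∂x},σ₀} ≤ C A₁^s ‖u‖_{Q^s_{∂x}}`, with `C` depending only on `s`. -/
theorem QsADx_le_of_bounded :
    ∀ s : ℝ, s ∈ Ioc (0:ℝ) 1 →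
    ∃ C : ℝ, 0 < C ∧
      ∀ T : ℝ, 0 < T →
      ∀ A : ℝ → ℝ, Measurable A →
      ∀ A₁ : ℝ, (∀ y ∈ Ioo (0:ℝ) 1, 0 ≤ A y ∧ A y ≤ A₁) →
      ∀ σ₀ : ℝ, 0 < σ₀ →
      ∀ u : ℝ × ℝ × ℝ → ℝ,
        (∀ x y t, u (x + 1, y, t) = u (x, y, t)) →
        MemLp u 2 (μΩT T) →
        QsADx T s A σ₀ u ≤ ENNReal.ofReal (C * A₁ ^ s) * QsDx T s u := by
  rintro s ⟨hs, -⟩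
  refine ⟨3 * 2 ^ s, by positivity, fun T _ A hA A₁ hAb σ₀ _ u hu_per hu => ?_⟩
  have hper : ∀ q, Periodic (fun x => u (x, q)) 1 := fun q x => hu_per x q.1 q.2
  obtain ⟨g, hg, hg_per, hug⟩ := exists_measurable_periodic_ae_eq hu.1
  have hQ (δ : ℝ) (hδ : 0 < δ) :
      eLpNorm (g ∘ shearX (fun _ => δ) - g) 2 (μΩT T) ≤ ENNReal.ofReal (δ ^ s) * QsDx T s u := by
    rw [← eLpNorm_comp_shearX_sub_congr hper hg_per hug measurable_const]
    exact eLpNorm_shearX_const_sub_le_QsDx hs.ne' hδ T u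
  have hA₁ : 0 ≤ A₁ := (hAb 2⁻¹ (by norm_num)).1.trans (hAb 2⁻¹ (by norm_num)).2
  refine iSup₂_le fun σ ⟨hσ, _⟩ => ?_
  have hσs : 0 ≤ σ ^ (1 / s) := by positivity
  calc ENNReal.ofReal σ⁻¹ * eLpNorm (u ∘ shearX (fun y => σ ^ (1 / s) * A y) - u) 2 (μΩT T)
      = ENNReal.ofReal σ⁻¹ * eLpNorm (g ∘ shearX (fun y => σ ^ (1 / s) * A y) - g) 2 (μΩT T) := by
        rw [eLpNorm_comp_shearX_sub_congr hper hg_per hug (by fun_prop)]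
    _ ≤ ENNReal.ofReal σ⁻¹ * (ENNReal.ofReal (3 * (2 * (σ ^ (1 / s) * A₁)) ^ s) * QsDx T s u) := by
        gcongr
        refine eLpNorm_shearX_sub_le hs.le hg hg_per (by fun_prop) (by positivity)
          (fun y hy => ⟨mul_nonneg hσs (hAb y hy).1, mul_le_mul_of_nonneg_left (hAb y hy).2 hσs⟩) hQ
    _ = ENNReal.ofReal (3 * 2 ^ s * A₁ ^ s) * QsDx T s u := by
        rw [← mul_assoc, ← ENNReal.ofReal_mul (by positivity),
          Real.mul_rpow zero_le_two (by positivity), Real.mul_rpow hσs hA₁, one_div,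
          Real.rpow_inv_rpow hσ.le hs.ne']
        congr 2
        field_simp

end
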